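/- arXiv:2310.08245 — 2 statements merged into one kernel-verified Lean document; each statement's English description precedes it below -/
import Mathlib

section
/- Let λ : [0,∞) → ℝ be continuous and nonnegative, y solve y'' = λ·y with y(0)=1, y'(0)=h ≥ 0, and J : [0,T) → ℝ positive C² with J'' ≤ λ·J, J(0)=1, J'(0) ≤ h. Then the function t ↦ J(t)/y(t) is nonincreasing on [0,T). -/
/-!
The solution `y` stays positive: up to its first zero, `y'' = λ y ≥ 0` makes `y'` nondecreasing,
hence `y' ≥ h ≥ 0` and `y ≥ y 0 = 1`. The Wronskian `W = J' y - J y'` then satisfies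
`W' = (J'' - λ J) y ≤ 0` and `W 0 = J' 0 - h ≤ 0`, so `W ≤ 0`, and `(J / y)' = W / y² ≤ 0`.
-/

open Set

lemma monotoneOn_of_hasDerivAt_nonneg {s : Set ℝ} (hs : Convex ℝ s) {f f' : ℝ → ℝ}
    (hf : ∀ x ∈ s, HasDerivAt f (f' x) x) (hf' : ∀ x ∈ interior s, 0 ≤ f' x) :
    MonotoneOn f s :=
  monotoneOn_of_hasDerivWithinAt_nonneg hs
    (fun x hx => (hf x hx).continuousAt.continuousWithinAt)
    (fun x hx => (hf x (interior_subset hx)).hasDerivWithinAt) hf'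

lemma antitoneOn_of_hasDerivAt_nonpos {s : Set ℝ} (hs : Convex ℝ s) {f f' : ℝ → ℝ}
    (hf : ∀ x ∈ s, HasDerivAt f (f' x) x) (hf' : ∀ x ∈ interior s, f' x ≤ 0) :
    AntitoneOn f s :=
  antitoneOn_of_hasDerivWithinAt_nonpos hs
    (fun x hx => (hf x hx).continuousAt.continuousWithinAt)
    (fun x hx => (hf x (interior_subset hx)).hasDerivWithinAt) hf'

lemma monotoneOn_Icc_of_deriv2_nonneg {y y' y'' : ℝ → ℝ} {a b : ℝ}
    (hy : ∀ t ∈ Icc a b, HasDerivAt y (y' t) t)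
    (hy' : ∀ t ∈ Icc a b, HasDerivAt y' (y'' t) t)
    (hy''_nonneg : ∀ t ∈ Ioo a b, 0 ≤ y'' t) (hy'a : 0 ≤ y' a) :
    MonotoneOn y (Icc a b) := by
  have hy'_mono : MonotoneOn y' (Icc a b) :=
    monotoneOn_of_hasDerivAt_nonneg (convex_Icc a b) hy' (by rwa [interior_Icc])
  refine monotoneOn_of_hasDerivAt_nonneg (convex_Icc a b) hy fun t ht => ?_
  rw [interior_Icc] at ht
  have hat : a ≤ t := ht.1.le
  exact hy'a.trans (hy'_mono (left_mem_Icc.2 (hat.trans ht.2.le)) ⟨hat, ht.2.le⟩ hat)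

lemma pos_of_deriv2_eq_nonneg_mul {l y y' : ℝ → ℝ} (hl_nonneg : ∀ t ≥ (0 : ℝ), 0 ≤ l t)
    (hy : ∀ t ≥ (0 : ℝ), HasDerivAt y (y' t) t)
    (hy' : ∀ t ≥ (0 : ℝ), HasDerivAt y' (l t * y t) t)
    (hy0 : 0 < y 0) (hy'0 : 0 ≤ y' 0) :
    ∀ t ≥ (0 : ℝ), 0 < y t := by
  by_contra! hneg
  obtain ⟨t, ht, hyt⟩ := hneg
  set Z := Ici 0 ∩ y ⁻¹' Iic 0
  have hy_cont : ContinuousOn y (Ici 0) := fun t ht => (hy t ht).continuousAt.continuousWithinAt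
  have hZ_closed : IsClosed Z := hy_cont.preimage_isClosed_of_isClosed isClosed_Ici isClosed_Iic
  have hZ_bdd : BddBelow Z := ⟨0, fun s hs => hs.1⟩
  obtain ⟨ht₀_nonneg, hyt₀⟩ : sInf Z ∈ Z := hZ_closed.csInf_mem ⟨t, ht, hyt⟩ hZ_bdd
  have hpos_before : ∀ s ∈ Ico 0 (sInf Z), 0 < y s := fun s hs =>
    not_le.1 fun hys => notMem_of_lt_csInf hs.2 hZ_bdd ⟨hs.1, hys⟩
  have hmono : MonotoneOn y (Icc 0 (sInf Z)) :=
    monotoneOn_Icc_of_deriv2_nonneg (fun s hs => hy s hs.1) (fun s hs => hy' s hs.1)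
      (fun s hs => mul_nonneg (hl_nonneg s hs.1.le) (hpos_before s ⟨hs.1.le, hs.2⟩).le) hy'0
  have := hmono (left_mem_Icc.2 ht₀_nonneg) (right_mem_Icc.2 ht₀_nonneg) ht₀_nonneg
  linarith [show y (sInf Z) ≤ 0 from hyt₀]

lemma antitoneOn_wronskian {s : Set ℝ} (hs : Convex ℝ s) {l y y' J J' J'' : ℝ → ℝ}
    (hy : ∀ t ∈ s, HasDerivAt y (y' t) t) (hy' : ∀ t ∈ s, HasDerivAt y' (l t * y t) t)
    (hJ : ∀ t ∈ s, HasDerivAt J (J' t) t) (hJ' : ∀ t ∈ s, HasDerivAt J' (J'' t) t)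
    (hJ_le : ∀ t ∈ s, J'' t ≤ l t * J t) (hy_nonneg : ∀ t ∈ s, 0 ≤ y t) :
    AntitoneOn (fun t => J' t * y t - J t * y' t) s := by
  refine antitoneOn_of_hasDerivAt_nonpos hs (f' := fun t => (J'' t - l t * J t) * y t)
    (fun t ht => ?_) fun t ht => ?_
  · exact (((hJ' t ht).mul (hy t ht)).sub ((hJ t ht).mul (hy' t ht))).congr_deriv (by ring)
  · have ht := interior_subset ht
    exact mul_nonpos_of_nonpos_of_nonneg (sub_nonpos.2 (hJ_le t ht)) (hy_nonneg t ht)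

lemma antitoneOn_div_of_wronskian_nonpos {s : Set ℝ} (hs : Convex ℝ s) {f f' g g' : ℝ → ℝ}
    (hf : ∀ t ∈ s, HasDerivAt f (f' t) t) (hg : ∀ t ∈ s, HasDerivAt g (g' t) t)
    (hg_ne : ∀ t ∈ s, g t ≠ 0) (hW : ∀ t ∈ s, f' t * g t - f t * g' t ≤ 0) :
    AntitoneOn (fun t => f t / g t) s :=
  antitoneOn_of_hasDerivAt_nonpos hs (fun t ht => (hf t ht).div (hg t ht) (hg_ne t ht))
    fun t ht => div_nonpos_of_nonpos_of_nonneg (hW t (interior_subset ht)) (sq_nonneg _)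

theorem stmt_4_general (l y y' J J' J'' : ℝ → ℝ) (h : ℝ) (T : EReal)
    (hlnn : ∀ t ≥ (0:ℝ), 0 ≤ l t)
    (hh : 0 ≤ h)
    (hy : ∀ t ≥ (0:ℝ), HasDerivAt y (y' t) t)
    (hy' : ∀ t ≥ (0:ℝ), HasDerivAt y' (l t * y t) t)
    (hy0 : y 0 = 1) (hy'0 : y' 0 = h)
    (hJ : ∀ t : ℝ, 0 ≤ t → (t : EReal) < T → HasDerivAt J (J' t) t)
    (hJ' : ∀ t : ℝ, 0 ≤ t → (t : EReal) < T → HasDerivAt J' (J'' t) t)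
    (hJineq : ∀ t : ℝ, 0 ≤ t → (t : EReal) < T → J'' t ≤ l t * J t)
    (hJ0 : J 0 = 1) (hJ'0 : J' 0 ≤ h) :
    AntitoneOn (fun t => J t / y t) {t : ℝ | 0 ≤ t ∧ (t : EReal) < T} := by
  set S := {t : ℝ | 0 ≤ t ∧ (t : EReal) < T}
  have hS : Convex ℝ S :=
    (ordConnected_Ici.inter (ordConnected_Iio.preimage_mono EReal.coe_strictMono.monotone)).convex
  have hy_pos := pos_of_deriv2_eq_nonneg_mul hlnn hy hy' (hy0 ▸ one_pos) (hy'0 ▸ hh)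
  have hW := antitoneOn_wronskian hS (fun t ht => hy t ht.1) (fun t ht => hy' t ht.1)
    (fun t ht => hJ t ht.1 ht.2) (fun t ht => hJ' t ht.1 ht.2)
    (fun t ht => hJineq t ht.1 ht.2) (fun t ht => (hy_pos t ht.1).le)
  refine antitoneOn_div_of_wronskian_nonpos hS (fun t ht => hJ t ht.1 ht.2)
    (fun t ht => hy t ht.1) (fun t ht => (hy_pos t ht.1).ne') fun t ht => ?_
  have h0 : (0 : ℝ) ∈ S := ⟨le_rfl, (EReal.coe_le_coe_iff.2 ht.1).trans_lt ht.2⟩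
  calc J' t * y t - J t * y' t ≤ J' 0 * y 0 - J 0 * y' 0 := hW h0 ht ht.1
    _ ≤ 0 := by rw [hy0, hJ0, hy'0]; linarith

/-- Under the comparison-lemma setup, the quotient `t ↦ J t / y t` is
nonincreasing on `[0,T)`. -/
theorem stmt_4 (l y y' J J' J'' : ℝ → ℝ) (h : ℝ) (T : EReal)
    (hl : ContinuousOn l (Set.Ici 0))
    (hlnn : ∀ t ≥ (0:ℝ), 0 ≤ l t)
    (hh : 0 ≤ h)
    (hy : ∀ t ≥ (0:ℝ), HasDerivAt y (y' t) t)
    (hy' : ∀ t ≥ (0:ℝ), HasDerivAt y' (l t * y t) t)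
    (hy'c : ContinuousOn y' (Set.Ici 0))
    (hy0 : y 0 = 1) (hy'0 : y' 0 = h)
    (hT : 0 < T)
    (hJpos : ∀ t : ℝ, 0 ≤ t → (t : EReal) < T → 0 < J t)
    (hJ : ∀ t : ℝ, 0 ≤ t → (t : EReal) < T → HasDerivAt J (J' t) t)
    (hJ' : ∀ t : ℝ, 0 ≤ t → (t : EReal) < T → HasDerivAt J' (J'' t) t)
    (hJ''c : ContinuousOn J'' {t : ℝ | 0 ≤ t ∧ (t : EReal) < T})
    (hJineq : ∀ t : ℝ, 0 ≤ t → (t : EReal) < T → J'' t ≤ l t * J t)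
    (hJ0 : J 0 = 1) (hJ'0 : J' 0 ≤ h) :
    AntitoneOn (fun t => J t / y t) {t : ℝ | 0 ≤ t ∧ (t : EReal) < T} :=
  stmt_4_general l y y' J J' J'' h T hlnn hh hy hy' hy0 hy'0 hJ hJ' hJineq hJ0 hJ'0
end

section
/- Let λ : [0,∞) → ℝ be continuous, nonnegative, nonincreasing with b₀ = ∫₀^∞ tλ(t)dt < ∞, b₁ = ∫₀^∞ λ(t)dt, and h > 0. Define ρ(t) = ∫₀ᵗ sλ(s)ds + ∫₀ᵗ λ(s)/(h + ∫₀ˢ λ(u)(hu+1)du) ds + log h. Then ρ is nondecreasing and ρ(t) ≤ b₀ + log(h(1+b₀)+b₁) for all t ≥ 0. -/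
/-!
Write `g u = l u * (h u + 1)` and `F s = h + ∫₀ˢ g`. Since `F' = g ≥ l ≥ 0` and `F > 0`, the
second integral of `ρ` is at most `∫₀ᵗ F'/F = log F(t) - log h`, while
`F(t) = h + h ∫₀ᵗ u l u du + ∫₀ᵗ l ≤ h (1 + b₀) + b₁`. Monotonicity holds because both
integrands are nonnegative.
-/

open MeasureTheory Set Real

section Primitive

variable {f g : ℝ → ℝ} {a b c x : ℝ}

theorem intervalIntegral_le_setIntegral_Ioi (hf : IntegrableOn f (Ioi a))
    (hf0 : ∀ x > a, 0 ≤ f x) (hab : a ≤ b) : ∫ x in a..b, f x ≤ ∫ x in Ioi a, f x := by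
  rw [intervalIntegral.integral_of_le hab]
  exact setIntegral_mono_set hf ((ae_restrict_mem measurableSet_Ioi).mono hf0)
    Ioc_subset_Ioi_self.eventuallyLE

theorem monotoneOn_intervalIntegral_of_nonneg (hf : ∀ b ≥ a, IntervalIntegrable f volume a b)
    (hf0 : ∀ x ≥ a, 0 ≤ f x) : MonotoneOn (fun b => ∫ x in a..b, f x) (Ici a) :=
  fun _ hs t ht hst => intervalIntegral.integral_mono_interval le_rfl hs hst
    ((ae_restrict_mem measurableSet_Ioc).mono fun x hx => hf0 x hx.1.le) (hf t ht)

theorem continuousOn_primitive_of_continuousOn (hab : a ≤ b) (hg : ContinuousOn g (Icc a b)) :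
    ContinuousOn (fun x => ∫ u in a..x, g u) (Icc a b) := by
  simpa only [uIcc_of_le hab] using intervalIntegral.continuousOn_primitive_interval'
    (hg.intervalIntegrable_of_Icc hab) left_mem_uIcc

theorem const_add_primitive_pos (hc : 0 < c) (hg0 : ∀ x ∈ Icc a b, 0 ≤ g x)
    (hx : x ∈ Icc a b) : 0 < c + ∫ u in a..x, g u :=
  add_pos_of_pos_of_nonneg hc <|
    intervalIntegral.integral_nonneg hx.1 fun u hu => hg0 u ⟨hu.1, hu.2.trans hx.2⟩

theorem intervalIntegrable_div_const_add_primitive (hab : a ≤ b) (hc : 0 < c)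
    (hf : ContinuousOn f (Icc a b)) (hg : ContinuousOn g (Icc a b))
    (hg0 : ∀ x ∈ Icc a b, 0 ≤ g x) :
    IntervalIntegrable (fun x => f x / (c + ∫ u in a..x, g u)) volume a b :=
  (hf.div (continuousOn_const.add (continuousOn_primitive_of_continuousOn hab hg))
    fun _ hx => (const_add_primitive_pos hc hg0 hx).ne').intervalIntegrable_of_Icc hab

theorem integral_div_const_add_primitive (hab : a ≤ b) (hc : 0 < c)
    (hg : ContinuousOn g (Icc a b)) (hg0 : ∀ x ∈ Icc a b, 0 ≤ g x) :
    ∫ x in a..b, g x / (c + ∫ u in a..x, g u) = log (c + ∫ u in a..b, g u) - log c := by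
  have hderiv : ∀ x ∈ Ioo a b,
      HasDerivAt (fun y => log (c + ∫ u in a..y, g u)) (g x / (c + ∫ u in a..x, g u)) x := by
    intro x hx
    have hG : HasDerivAt (fun y => ∫ u in a..y, g u) (g x) x :=
      intervalIntegral.integral_hasDerivAt_right
        ((hg.mono (Icc_subset_Icc_right hx.2.le)).intervalIntegrable_of_Icc hx.1.le)
        ((hg.mono Ioo_subset_Icc_self).stronglyMeasurableAtFilter isOpen_Ioo x hx)
        (hg.continuousAt (Icc_mem_nhds hx.1 hx.2))
    exact (hG.const_add c).log (const_add_primitive_pos hc hg0 (Ioo_subset_Icc_self hx)).ne'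
  have hcont : ContinuousOn (fun y => log (c + ∫ u in a..y, g u)) (Icc a b) :=
    (continuousOn_const.add (continuousOn_primitive_of_continuousOn hab hg)).log
      fun _ hx => (const_add_primitive_pos hc hg0 hx).ne'
  simpa using intervalIntegral.integral_eq_sub_of_hasDerivAt_of_le hab hcont hderiv
    (intervalIntegrable_div_const_add_primitive hab hc hg hg hg0)

theorem integral_div_const_add_primitive_le (hab : a ≤ b) (hc : 0 < c)
    (hf : ContinuousOn f (Icc a b)) (hg : ContinuousOn g (Icc a b))
    (hg0 : ∀ x ∈ Icc a b, 0 ≤ g x) (hfg : ∀ x ∈ Icc a b, f x ≤ g x) :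
    ∫ x in a..b, f x / (c + ∫ u in a..x, g u) ≤ log (c + ∫ u in a..b, g u) - log c := by
  rw [← integral_div_const_add_primitive hab hc hg hg0]
  exact intervalIntegral.integral_mono_on hab
    (intervalIntegrable_div_const_add_primitive hab hc hf hg hg0)
    (intervalIntegrable_div_const_add_primitive hab hc hg hg hg0)
    fun x hx => div_le_div_of_nonneg_right (hfg x hx) (const_add_primitive_pos hc hg0 hx).le

end Primitive

theorem stmt_19_general (l : ℝ → ℝ) (h : ℝ)
    (hl : ContinuousOn l (Set.Ici 0))
    (hlnn : ∀ t ≥ (0:ℝ), 0 ≤ l t)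
    (hb0int : IntegrableOn (fun t => t * l t) (Set.Ioi 0))
    (hb1int : IntegrableOn l (Set.Ioi 0))
    (hh : 0 < h) :
    MonotoneOn
      (fun t => (∫ s in (0:ℝ)..t, s * l s) +
        (∫ s in (0:ℝ)..t, l s / (h + ∫ u in (0:ℝ)..s, l u * (h * u + 1))) +
        Real.log h) (Set.Ici 0) ∧
    ∀ t ≥ (0:ℝ),
      (∫ s in (0:ℝ)..t, s * l s) +
        (∫ s in (0:ℝ)..t, l s / (h + ∫ u in (0:ℝ)..s, l u * (h * u + 1))) +
        Real.log h ≤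
      (∫ s in Set.Ioi (0:ℝ), s * l s) +
        Real.log (h * (1 + ∫ s in Set.Ioi (0:ℝ), s * l s) +
          ∫ s in Set.Ioi (0:ℝ), l s) := by
  have hlI (t : ℝ) : ContinuousOn l (Icc 0 t) := hl.mono Icc_subset_Ici_self
  have hulI (t : ℝ) : ContinuousOn (fun u => u * l u) (Icc 0 t) := continuousOn_id.mul (hlI t)
  have hgI (t : ℝ) : ContinuousOn (fun u => l u * (h * u + 1)) (Icc 0 t) :=
    (hlI t).mul (by fun_prop)
  have hg0 (t : ℝ) : ∀ u ∈ Icc 0 t, 0 ≤ l u * (h * u + 1) := fun u hu =>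
    mul_nonneg (hlnn u hu.1) (by nlinarith [hu.1])
  have hFpos {t : ℝ} (ht : 0 ≤ t) := const_add_primitive_pos hh (hg0 t) (right_mem_Icc.2 ht)
  refine ⟨?_, fun t ht => ?_⟩
  · have hA := monotoneOn_intervalIntegral_of_nonneg
      (fun t ht => (hulI t).intervalIntegrable_of_Icc ht) fun s hs => mul_nonneg hs (hlnn s hs)
    have hB := monotoneOn_intervalIntegral_of_nonneg
      (fun t ht => intervalIntegrable_div_const_add_primitive ht hh (hlI t) (hgI t) (hg0 t))
      fun s hs => div_nonneg (hlnn s hs) (hFpos hs).le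
    exact (hA.add hB).add_const _
  · have hA := intervalIntegral_le_setIntegral_Ioi hb0int
      (fun s hs => mul_nonneg hs.le (hlnn s hs.le)) ht
    have hB := integral_div_const_add_primitive_le ht hh (hlI t) (hgI t) (hg0 t)
      fun u hu => le_mul_of_one_le_right (hlnn u hu.1) (by nlinarith [hu.1])
    have hFle : h + ∫ u in (0:ℝ)..t, l u * (h * u + 1) ≤
        h * (1 + ∫ s in Ioi (0:ℝ), s * l s) + ∫ s in Ioi (0:ℝ), l s := by
      rw [intervalIntegral.integral_congr (g := fun u => h * (u * l u) + l u) fun u _ => by ring,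
        intervalIntegral.integral_add (((hulI t).intervalIntegrable_of_Icc ht).const_mul h)
          ((hlI t).intervalIntegrable_of_Icc ht),
        intervalIntegral.integral_const_mul]
      nlinarith [intervalIntegral_le_setIntegral_Ioi hb1int (fun s hs => hlnn s hs.le) ht]
    linarith [Real.log_le_log (hFpos ht) hFle]

/-- With `l` continuous, nonnegative, nonincreasing, `b₀ = ∫₀^∞ t·l t dt < ∞`,
`b₁ = ∫₀^∞ l t dt`, `h > 0`, the function
`ρ t = ∫₀ᵗ s·l s ds + ∫₀ᵗ l s/(h + ∫₀ˢ l u·(h·u+1) du) ds + log h`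
is nondecreasing and bounded above by `b₀ + log (h(1+b₀)+b₁)`. -/
theorem stmt_19 (l : ℝ → ℝ) (h : ℝ)
    (hl : ContinuousOn l (Set.Ici 0))
    (hlnn : ∀ t ≥ (0:ℝ), 0 ≤ l t)
    (hlmono : AntitoneOn l (Set.Ici 0))
    (hb0int : IntegrableOn (fun t => t * l t) (Set.Ioi 0))
    (hb1int : IntegrableOn l (Set.Ioi 0))
    (hh : 0 < h) :
    MonotoneOn
      (fun t => (∫ s in (0:ℝ)..t, s * l s) +
        (∫ s in (0:ℝ)..t, l s / (h + ∫ u in (0:ℝ)..s, l u * (h * u + 1))) +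
        Real.log h) (Set.Ici 0) ∧
    ∀ t ≥ (0:ℝ),
      (∫ s in (0:ℝ)..t, s * l s) +
        (∫ s in (0:ℝ)..t, l s / (h + ∫ u in (0:ℝ)..s, l u * (h * u + 1))) +
        Real.log h ≤
      (∫ s in Set.Ioi (0:ℝ), s * l s) +
        Real.log (h * (1 + ∫ s in Set.Ioi (0:ℝ), s * l s) +
          ∫ s in Set.Ioi (0:ℝ), l s) :=
  stmt_19_general l h hl hlnn hb0int hb1int hh
end
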